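/- Suppose the perturbed reduced order blended dynamics ṡ̄ = (1/N)∑_i F_i(t, s̄ + e_i, z̄ + d_i), ż̄ = Z(t, z̄, s̄ + e_0) with input (e_0, e_1, ..., e_N, d_1, ..., d_N) is δ-ISS with (β, γ̂), and that α(s) := s − γ̂(2s) is a class-𝒦_∞ function. Then the perturbed blended dynamics ṡ = (1/N)∑_i F_i(t, s + e_i, z_i), ż_i = Z(t, z_i, s + e_i) with input (e_1, ..., e_N) is δ-ISS. -/

import Mathlib

open Filter

def ClassKinf (γ : ℝ → ℝ) : Prop :=
  ContinuousOn γ (Set.Ici 0) ∧ StrictMonoOn γ (Set.Ici 0) ∧ γ 0 = 0 ∧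
    Tendsto γ atTop atTop

def ClassKL (β : ℝ → ℝ → ℝ) : Prop :=
  (∀ t ∈ Set.Ici (0 : ℝ), ContinuousOn (fun r => β r t) (Set.Ici 0) ∧
      StrictMonoOn (fun r => β r t) (Set.Ici 0) ∧ β 0 t = 0) ∧
  (∀ r > (0 : ℝ), AntitoneOn (β r) (Set.Ici 0) ∧ Tendsto (β r) atTop (nhds 0)) ∧
  (∀ r ≥ (0 : ℝ), ∀ t ≥ (0 : ℝ), 0 ≤ β r t)

/-!
Let `x` be the distance between two solutions of the blended dynamics and `E` the size of the
differences of their inputs. For each agent `i`, the pair `(s, z_i)` solves the reduced order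
dynamics with `e₀ = e_i` and `d_j = z_j - z_i`, whose differences are at most `2 x`, so δ-ISS of
the reduced dynamics restarted at any time `u` gives
`x t ≤ β (x u) (t - u) + γ̂ (max E (2 sup_[u, t] x))`.
Because `α s = s - γ̂ (2 s)` is of class 𝒦∞ this loop can be solved: first for a uniform bound
on `x`, then, waiting on each level `b` a time `D b` with `β b (D b) ≤ α b / 2`, for a decrease
of the bound along `b ↦ b - α b / 2`, which tends to `0`, down to the gain level
`E / 2 + 2 γ̂ E`.
-/

open Set Topology

namespace ClassKinf

variable {γ : ℝ → ℝ}

lemma map_zero (hγ : ClassKinf γ) : γ 0 = 0 := hγ.2.2.1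

lemma mono (hγ : ClassKinf γ) {a b : ℝ} (ha : 0 ≤ a) (hab : a ≤ b) : γ a ≤ γ b :=
  hγ.2.1.monotoneOn ha (ha.trans hab) hab

lemma nonneg (hγ : ClassKinf γ) {a : ℝ} (ha : 0 ≤ a) : 0 ≤ γ a :=
  hγ.map_zero ▸ hγ.mono le_rfl ha

lemma pos (hγ : ClassKinf γ) {a : ℝ} (ha : 0 < a) : 0 < γ a :=
  hγ.map_zero ▸ hγ.2.1 (mem_Ici.2 le_rfl) (mem_Ici.2 ha.le) ha

lemma exists_continuous_inv (hγ : ClassKinf γ) :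
    ∃ γinv : ℝ → ℝ, Continuous γinv ∧ Monotone γinv ∧ γinv 0 = 0 ∧
      ∀ x c, 0 ≤ x → γ x ≤ c → x ≤ γinv c := by
  -- extend `γ` by the identity on `(-∞, 0]` to an order automorphism of `ℝ`
  set g : ℝ → ℝ := fun s => γ (max s 0) + min s 0 with hg
  have hg_nonneg : ∀ {s}, 0 ≤ s → g s = γ s := fun hs => by simp [hg, hs]
  have hg_nonpos : ∀ {s}, s ≤ 0 → g s = s := fun hs => by simp [hg, hs, hγ.map_zero]
  have hmono : StrictMono g := by
    intro s t hst
    rcases le_or_gt 0 s with hs | hs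
    · rw [hg_nonneg hs, hg_nonneg (hs.trans hst.le)]
      exact hγ.2.1 hs (hs.trans hst.le) hst
    rcases le_or_gt 0 t with ht | ht
    · rw [hg_nonpos hs.le, hg_nonneg ht]
      exact hs.trans_le (hγ.nonneg ht)
    · rwa [hg_nonpos hs.le, hg_nonpos ht.le]
  have hcont : Continuous g :=
    (hγ.1.comp_continuous (continuous_id.max continuous_const) fun s => le_max_right s 0).add
      (continuous_id.min continuous_const)
  have hsurj : Function.Surjective g := by
    refine hcont.surjective (hγ.2.2.2.congr' ?_) (tendsto_id.congr' ?_)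
    · filter_upwards [eventually_ge_atTop 0] with s hs using (hg_nonneg hs).symm
    · filter_upwards [eventually_le_atBot 0] with s hs using (hg_nonpos hs).symm
  set e := hmono.orderIsoOfSurjective g hsurj
  refine ⟨e.symm, e.symm.continuous, e.symm.monotone, ?_, fun x c hx hxc => ?_⟩
  · rw [e.symm_apply_eq]
    exact (hg_nonneg le_rfl).trans hγ.map_zero |>.symm
  · rw [e.le_symm_apply]
    exact (hg_nonneg hx).trans_le hxc

end ClassKinf

namespace ClassKL

variable {β : ℝ → ℝ → ℝ}

lemma map_zero_left (hβ : ClassKL β) {t : ℝ} (ht : 0 ≤ t) : β 0 t = 0 := (hβ.1 t ht).2.2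

lemma nonneg (hβ : ClassKL β) {r t : ℝ} (hr : 0 ≤ r) (ht : 0 ≤ t) : 0 ≤ β r t :=
  hβ.2.2 r hr t ht

lemma mono_left (hβ : ClassKL β) {t a b : ℝ} (ht : 0 ≤ t) (ha : 0 ≤ a) (hab : a ≤ b) :
    β a t ≤ β b t :=
  (hβ.1 t ht).2.1.monotoneOn ha (ha.trans hab) hab

lemma anti_right (hβ : ClassKL β) {r s t : ℝ} (hr : 0 ≤ r) (hs : 0 ≤ s) (hst : s ≤ t) :
    β r t ≤ β r s := by
  rcases hr.eq_or_lt with rfl | hr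
  · rw [hβ.map_zero_left hs, hβ.map_zero_left (hs.trans hst)]
  · exact (hβ.2.1 r hr).1 hs (hs.trans hst) hst

lemma exists_reach_time (hβ : ClassKL β) {ε : ℝ → ℝ} (hε : ∀ r > 0, 0 < ε r) (hε0 : 0 ≤ ε 0) :
    ∃ D : ℝ → ℝ, (∀ r, 1 ≤ D r) ∧ ∀ r, 0 ≤ r → β r (D r) ≤ ε r := by
  have : ∀ r, ∃ d, 1 ≤ d ∧ (0 ≤ r → β r d ≤ ε r) := by
    intro r
    rcases lt_trichotomy r 0 with hr | rfl | hr
    · exact ⟨1, le_rfl, fun h => absurd h hr.not_ge⟩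
    · exact ⟨1, le_rfl, fun _ => (hβ.map_zero_left zero_le_one).trans_le hε0⟩
    · obtain ⟨d, hd, hd1⟩ := (((hβ.2.1 r hr).2.eventually (ge_mem_nhds (hε r hr))).and
        (eventually_ge_atTop 1)).exists
      exact ⟨d, hd1, fun _ => hd⟩
  choose D hD1 hD using this
  exact ⟨D, hD1, hD⟩

end ClassKL

section SlidingAverage

variable {φ : ℝ → ℝ}

lemma Monotone.continuous_integral_add_one (hφ : Monotone φ) :
    Continuous fun r => ∫ u in r..r + 1, φ u := by
  have hint : ∀ a b : ℝ, IntervalIntegrable φ MeasureTheory.volume a b :=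
    fun _ _ => hφ.intervalIntegrable
  have hprim := intervalIntegral.continuous_primitive hint 0
  exact ((hprim.comp (continuous_add_const 1)).sub hprim).congr fun r =>
    intervalIntegral.integral_interval_sub_left (hint 0 (r + 1)) (hint 0 r)

lemma Monotone.monotone_integral_add_one (hφ : Monotone φ) :
    Monotone fun r => ∫ u in r..r + 1, φ u := by
  intro a b hab
  have hshift : ∀ c, ∫ u in c..c + 1, φ u = ∫ v in (0 : ℝ)..1, φ (v + c) := fun c => by
    rw [intervalIntegral.integral_comp_add_right, zero_add, add_comm 1 c]
  simp only [hshift]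
  exact intervalIntegral.integral_mono_on zero_le_one
    (hφ.comp (monotone_id.add_const a)).intervalIntegrable
    (hφ.comp (monotone_id.add_const b)).intervalIntegrable fun v _ => hφ (by linarith)

lemma Monotone.le_integral_add_one (hφ : Monotone φ) (r : ℝ) : φ r ≤ ∫ u in r..r + 1, φ u := by
  calc φ r = ∫ _ in r..r + 1, φ r := by simp
    _ ≤ ∫ u in r..r + 1, φ u := intervalIntegral.integral_mono_on (by linarith)
      intervalIntegrable_const hφ.intervalIntegrable fun _ hu => hφ hu.1

lemma Monotone.integral_add_one_le (hφ : Monotone φ) (r : ℝ) :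
    ∫ u in r..r + 1, φ u ≤ φ (r + 1) := by
  calc ∫ u in r..r + 1, φ u ≤ ∫ _ in r..r + 1, φ (r + 1) :=
        intervalIntegral.integral_mono_on (by linarith)
          hφ.intervalIntegrable intervalIntegrable_const fun _ hu => hφ hu.2
    _ = φ (r + 1) := by simp

end SlidingAverage

/-- Averaging `n ↦ ∑ k ≤ n, f k` over `[r, r + 1]` turns a countable family of decaying
functions into one that is also continuous and monotone in the parameter `r`. -/
lemma exists_continuous_majorant {f : ℕ → ℝ → ℝ} (hfa : ∀ n, Antitone (f n))
    (hft : ∀ n, Tendsto (f n) atTop (𝓝 0)) :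
    ∃ h : ℝ → ℝ → ℝ, (∀ t, Continuous (h · t)) ∧ (∀ t, Monotone (h · t)) ∧
      (∀ r, Antitone (h r)) ∧ (∀ r, Tendsto (h r) atTop (𝓝 0)) ∧
      ∀ r t, f (⌊r⌋₊ + 1) t ≤ h r t := by
  set g : ℝ → ℝ → ℝ := fun t u => ∑ k ∈ Finset.range (⌊u⌋₊ + 2), f k t
  have hf0 : ∀ n t, 0 ≤ f n t := fun n => (hfa n).le_of_tendsto (hft n)
  have hg : ∀ t, Monotone (g t) := fun t u v huv =>
    Finset.sum_le_sum_of_subset_of_nonneg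
      (Finset.range_mono (by have := Nat.floor_mono huv; omega)) fun k _ _ => hf0 k t
  refine ⟨fun r t => ∫ u in r..r + 1, g t u, fun t => (hg t).continuous_integral_add_one,
    fun t => (hg t).monotone_integral_add_one, fun r s t hst => ?_, fun r => ?_, fun r t => ?_⟩
  · exact intervalIntegral.integral_mono_on (by linarith) (hg t).intervalIntegrable
      (hg s).intervalIntegrable fun u _ => Finset.sum_le_sum fun k _ => hfa k hst
  · refine squeeze_zero (fun t => (Finset.sum_nonneg fun k _ => hf0 k t).trans
      ((hg t).le_integral_add_one r)) (fun t => (hg t).integral_add_one_le r) ?_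
    simpa using tendsto_finsetSum _ fun k _ => hft k
  · refine le_trans ?_ ((hg t).le_integral_add_one r)
    exact Finset.single_le_sum (fun k _ => hf0 k t) (by simp)

lemma ClassKL.add_min {β : ℝ → ℝ → ℝ} (hβ : ClassKL β) {ψ : ℝ → ℝ}
    (hψc : ContinuousOn ψ (Ici 0)) (hψm : MonotoneOn ψ (Ici 0)) (hψ0 : ψ 0 = 0)
    {h : ℝ → ℝ → ℝ} (hc : ∀ t, Continuous (h · t)) (hm : ∀ t, Monotone (h · t))
    (ha : ∀ r, Antitone (h r)) (ht : ∀ r, Tendsto (h r) atTop (𝓝 0)) :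
    ClassKL fun r t => β r t + min (ψ r) (h r t) := by
  have hh0 : ∀ r t, 0 ≤ h r t := fun r => (ha r).le_of_tendsto (ht r)
  have hψ : ∀ {r}, 0 ≤ r → 0 ≤ ψ r := fun hr => hψ0 ▸ hψm (mem_Ici.2 le_rfl) hr hr
  refine ⟨fun t ht0 => ⟨(hβ.1 t ht0).1.add (hψc.inf (hc t).continuousOn), ?_, ?_⟩,
    fun r hr => ⟨?_, ?_⟩, fun r hr t ht0 => ?_⟩
  · exact (hβ.1 t ht0).2.1.add_monotone fun a ha b hb hab =>
      min_le_min (hψm ha hb hab) (hm t hab)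
  · simp [hβ.map_zero_left ht0, hψ0, hh0]
  · exact (hβ.2.1 r hr).1.add fun s _ t _ hst => min_le_min le_rfl (ha r hst)
  · have hmin : Tendsto (fun t => min (ψ r) (h r t)) atTop (𝓝 0) :=
      squeeze_zero (fun t => le_min (hψ hr.le) (hh0 r t)) (fun t => min_le_right _ _) (ht r)
    simpa using (hβ.2.1 r hr).2.add hmin
  · exact add_nonneg (hβ.nonneg hr ht0) (le_min (hψ hr) (hh0 r t))

/-- Number of consecutive durations `d 0, d 1, …` that fit into time `τ`; the search up to
`⌈τ⌉₊` suffices because every duration is at least `1`. -/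
noncomputable def stairIndex (d : ℕ → ℝ) (τ : ℝ) : ℕ :=
  Nat.findGreatest (fun k => ∑ j ∈ Finset.range k, d j ≤ τ) ⌈τ⌉₊

section StairIndex

variable {d : ℕ → ℝ}

lemma sum_range_stairIndex_le {τ : ℝ} (hτ : 0 ≤ τ) :
    ∑ j ∈ Finset.range (stairIndex d τ), d j ≤ τ :=
  Nat.findGreatest_spec (P := fun k => ∑ j ∈ Finset.range k, d j ≤ τ) (Nat.zero_le _)
    (by simpa using hτ)

lemma le_stairIndex (hd : ∀ j, 1 ≤ d j) {k : ℕ} {τ : ℝ}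
    (hk : ∑ j ∈ Finset.range k, d j ≤ τ) : k ≤ stairIndex d τ := by
  refine Nat.le_findGreatest ?_ hk
  have : (k : ℝ) ≤ ∑ j ∈ Finset.range k, d j := by
    simpa using Finset.card_nsmul_le_sum (Finset.range k) d 1 fun j _ => hd j
  exact_mod_cast (this.trans hk).trans (Nat.le_ceil τ)

lemma monotone_stairIndex (hd : ∀ j, 1 ≤ d j) : Monotone (stairIndex d) := by
  intro σ τ hστ
  rcases lt_or_ge σ 0 with hσ | hσ
  · simp [stairIndex, Nat.ceil_eq_zero.2 hσ.le]
  · exact le_stairIndex hd ((sum_range_stairIndex_le hσ).trans hστ)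

lemma tendsto_stairIndex (hd : ∀ j, 1 ≤ d j) : Tendsto (stairIndex d) atTop atTop :=
  tendsto_atTop.2 fun _ => (eventually_ge_atTop _).mono fun _ => le_stairIndex hd

end StairIndex

noncomputable def halfStep (α : ℝ → ℝ) (s : ℝ) : ℝ := s - α s / 2

section HalfStep

variable {α : ℝ → ℝ}

lemma iterate_halfStep_nonneg (hα2 : ∀ s, 0 ≤ s → α s ≤ 2 * s) {m : ℝ} (hm : 0 ≤ m) (k : ℕ) :
    0 ≤ (halfStep α)^[k] m := by
  induction k with
  | zero => exact hm
  | succ k ih =>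
    rw [Function.iterate_succ_apply', halfStep]
    linarith [hα2 _ ih]

lemma antitone_iterate_halfStep (hα : ClassKinf α) (hα2 : ∀ s, 0 ≤ s → α s ≤ 2 * s) {m : ℝ}
    (hm : 0 ≤ m) :
    Antitone fun k => (halfStep α)^[k] m :=
  antitone_nat_of_succ_le fun k => by
    rw [Function.iterate_succ_apply', halfStep]
    linarith [hα.nonneg (iterate_halfStep_nonneg hα2 hm k)]

lemma tendsto_iterate_halfStep (hα : ClassKinf α) (hα2 : ∀ s, 0 ≤ s → α s ≤ 2 * s) {m : ℝ}
    (hm : 0 ≤ m) :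
    Tendsto (fun k => (halfStep α)^[k] m) atTop (𝓝 0) := by
  set b := fun k => (halfStep α)^[k] m
  have hb0 : ∀ k, 0 ≤ b k := iterate_halfStep_nonneg hα2 hm
  have hb := tendsto_atTop_ciInf (antitone_iterate_halfStep hα hα2 hm)
    ⟨0, by rintro _ ⟨k, rfl⟩; exact hb0 k⟩
  set L := ⨅ k, b k
  have hL : 0 ≤ L := le_ciInf hb0
  -- the limit is a fixed point of `halfStep α`, i.e. a zero of `α`
  have hαb : Tendsto (fun k => α (b k)) atTop (𝓝 (α L)) :=
    ((hα.1 L hL).tendsto.comp (tendsto_nhdsWithin_iff.2 ⟨hb, .of_forall hb0⟩))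
  have hfix : Tendsto (fun k => b (k + 1)) atTop (𝓝 (L - α L / 2)) := by
    simpa only [b, Function.iterate_succ_apply', halfStep] using hb.sub (hαb.div_const 2)
  have hαL : α L = 0 := by
    linarith [tendsto_nhds_unique (hb.comp (tendsto_add_atTop_nat 1)) hfix]
  have : L = 0 := hα.2.1.injOn hL (mem_Ici.2 le_rfl) (hαL.trans hα.map_zero.symm)
  rwa [this] at hb

end HalfStep

noncomputable def smallGainGain (γ : ℝ → ℝ) (s : ℝ) : ℝ := s / 2 + 2 * γ s

lemma classKinf_smallGainGain {γ : ℝ → ℝ} (hγ : ClassKinf γ) : ClassKinf (smallGainGain γ) := by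
  refine ⟨(continuousOn_id.div_const 2).add (continuousOn_const.mul hγ.1),
    fun a ha b hb hab => ?_, by simp [smallGainGain, hγ.map_zero], ?_⟩
  · have := hγ.2.1 ha hb hab
    simp only [smallGainGain]
    linarith
  · refine tendsto_atTop_mono' atTop ?_ (tendsto_id.atTop_div_const two_pos)
    filter_upwards [eventually_ge_atTop 0] with s hs
    simp only [id, smallGainGain]
    linarith [hγ.nonneg hs]

/-- The restart inequality that the δ-ISS estimate of the agents yields for the distance `x`
of two solutions on `[t0, T]`, when the external inputs are bounded by `E` and the coupling
inputs by twice a bound `M` of `x`. -/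
def SmallGainIneq (β : ℝ → ℝ → ℝ) (γ : ℝ → ℝ) (E : ℝ) (x : ℝ → ℝ) (t0 T : ℝ) : Prop :=
  ∀ u t' M, t0 ≤ u → u ≤ t' → t' ≤ T → (∀ s ∈ Icc u t', x s ≤ M) →
    x t' ≤ β (x u) (t' - u) + γ (max E (2 * M))

noncomputable def overshoot (β : ℝ → ℝ → ℝ) (γinv : ℝ → ℝ) (r : ℝ) : ℝ :=
  max (γinv (β r 0)) (2 * β r 0)

section Overshoot

variable {β : ℝ → ℝ → ℝ} {γinv : ℝ → ℝ}

lemma overshoot_nonneg (hβ : ClassKL β) {r : ℝ} (hr : 0 ≤ r) : 0 ≤ overshoot β γinv r :=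
  le_max_of_le_right (by linarith [hβ.nonneg hr le_rfl])

lemma overshoot_mono (hβ : ClassKL β) (hinv : Monotone γinv) {a b : ℝ} (ha : 0 ≤ a)
    (hab : a ≤ b) : overshoot β γinv a ≤ overshoot β γinv b := by
  have := hβ.mono_left le_rfl ha hab
  exact max_le_max (hinv this) (by linarith)

lemma continuousOn_overshoot (hβ : ClassKL β) (hinv : Continuous γinv) :
    ContinuousOn (overshoot β γinv) (Ici 0) :=
  have h := (hβ.1 0 self_mem_Ici).1
  (hinv.comp_continuousOn h).sup (continuousOn_const.mul h)

lemma overshoot_zero (hβ : ClassKL β) (hinv : γinv 0 = 0) : overshoot β γinv 0 = 0 := by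
  simp [overshoot, hβ.map_zero_left le_rfl, hinv]

end Overshoot

namespace SmallGainIneq

variable {β : ℝ → ℝ → ℝ} {γ γinv : ℝ → ℝ} {E : ℝ} {x : ℝ → ℝ} {t0 T : ℝ}

/-- The small-gain condition lets the loop `X ≤ β r 0 + γ (2 X)` be solved
for the supremum `X` of `x`. -/
lemma le_max_overshoot (hQ : SmallGainIneq β γ E x t0 T) (hβ : ClassKL β)
    (hinv : ∀ x c, 0 ≤ x → x - γ (2 * x) ≤ c → x ≤ γinv c) (hT : t0 ≤ T)
    (hbdd : BddAbove (x '' Icc t0 T)) (hx : ∀ t ∈ Icc t0 T, 0 ≤ x t) :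
    ∀ t ∈ Icc t0 T, x t ≤ max (overshoot β γinv (x t0)) (smallGainGain γ E) := by
  set X := sSup (x '' Icc t0 T)
  have hxX : ∀ t ∈ Icc t0 T, x t ≤ X := fun t ht => le_csSup hbdd (mem_image_of_mem x ht)
  have ht0 : t0 ∈ Icc t0 T := ⟨le_rfl, hT⟩
  have hX : 0 ≤ X := (hx t0 ht0).trans (hxX t0 ht0)
  set B := β (x t0) 0
  have hloop : X ≤ B + γ (max E (2 * X)) := by
    refine csSup_le ⟨x t0, mem_image_of_mem x ht0⟩ ?_
    rintro _ ⟨s, hs, rfl⟩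
    calc x s ≤ β (x t0) (s - t0) + γ (max E (2 * X)) :=
          hQ t0 s X le_rfl hs.1 hs.2 fun s' hs' => hxX s' ⟨hs'.1, hs'.2.trans hs.2⟩
      _ ≤ B + γ (max E (2 * X)) := by
          gcongr
          exact hβ.anti_right (hx t0 ht0) le_rfl (by linarith [hs.1])
  intro t ht
  refine (hxX t ht).trans ?_
  rcases le_or_gt (2 * X) E with hXE | hXE
  · rw [max_eq_left hXE] at hloop
    have : 0 ≤ E / 2 := by linarith
    rcases le_total B (γ E) with hB | hB
    · exact le_max_of_le_right (by unfold smallGainGain; linarith)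
    · exact le_max_of_le_left (le_max_of_le_right (by linarith))
  · rw [max_eq_right hXE.le] at hloop
    exact le_max_of_le_left (le_max_of_le_left (hinv X B hX (by linarith)))

/-- Once `x ≤ b` on a window of length `D b`, at its end `x ≤ b - α b / 2`
with `α b = b - γ (2 b)`, as long as `b` dominates the gain of the external input. -/
lemma le_max_iterate (hQ : SmallGainIneq β γ E x t0 T) (hβ : ClassKL β) (hγ : ClassKinf γ)
    (hinv : ∀ x c, 0 ≤ x → x - γ (2 * x) ≤ c → x ≤ γinv c) (hT : t0 ≤ T)
    (hbdd : BddAbove (x '' Icc t0 T)) (hx : ∀ t ∈ Icc t0 T, 0 ≤ x t) (hE : 0 ≤ E)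
    {D : ℝ → ℝ} (hD1 : ∀ b, 1 ≤ D b) (hD : ∀ b, 0 ≤ b → β b (D b) ≤ (b - γ (2 * b)) / 2)
    {b : ℕ → ℝ} (hb0 : overshoot β γinv (x t0) ≤ b 0)
    (hb : ∀ k, b (k + 1) = halfStep (fun s => s - γ (2 * s)) (b k)) (k : ℕ) :
    ∀ t ∈ Icc t0 T, t0 + ∑ j ∈ Finset.range k, D (b j) ≤ t →
      x t ≤ max (b k) (smallGainGain γ E) := by
  induction k with
  | zero =>
    exact fun t ht _ => (hQ.le_max_overshoot hβ hinv hT hbdd hx t ht).trans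
      (max_le_max hb0 le_rfl)
  | succ k ih =>
    intro t ht hkt
    rw [Finset.sum_range_succ] at hkt
    have hDk := hD1 (b k)
    have hsum : 0 ≤ ∑ j ∈ Finset.range k, D (b j) :=
      Finset.sum_nonneg fun j _ => zero_le_one.trans (hD1 (b j))
    rcases le_or_gt (b k) (smallGainGain γ E) with hbk | hbk
    · exact (ih t ht (by linarith)).trans ((max_le hbk le_rfl).trans (le_max_right _ _))
    have hxb : ∀ s ∈ Icc (t - D (b k)) t, x s ≤ b k := fun s hs =>
      (ih s ⟨by linarith [hs.1], hs.2.trans ht.2⟩ (by linarith [hs.1])).trans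
        (max_le le_rfl hbk.le)
    have hgain : E ≤ 2 * b k := by unfold smallGainGain at hbk; linarith [hγ.nonneg hE]
    have hu : t - D (b k) ∈ Icc t0 T := ⟨by linarith, by linarith [ht.2]⟩
    calc x t ≤ β (x (t - D (b k))) (t - (t - D (b k))) + γ (max E (2 * b k)) :=
          hQ _ t _ hu.1 (by linarith) ht.2 hxb
      _ ≤ β (b k) (D (b k)) + γ (2 * b k) := by
          rw [sub_sub_cancel, max_eq_right hgain]
          gcongr
          exact hβ.mono_left (by linarith) (hx _ hu) (hxb _ ⟨le_rfl, by linarith⟩)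
      _ ≤ b (k + 1) := by
          rw [hb, halfStep]
          linarith [hD (b k) (by linarith)]
      _ ≤ _ := le_max_left _ _

end SmallGainIneq

/-- The decay rate `β'` comes from running the staircase of `SmallGainIneq.le_max_iterate`
from the level `overshoot β γinv n` for every `n : ℕ` and taking a majorant of the countably
many resulting staircase functions. -/
theorem exists_classKL_of_smallGainIneq {β : ℝ → ℝ → ℝ} {γ : ℝ → ℝ} (hβ : ClassKL β)
    (hγ : ClassKinf γ) (hα : ClassKinf fun s => s - γ (2 * s)) :
    ∃ β' : ℝ → ℝ → ℝ, ClassKL β' ∧ (∀ r ≥ 0, ∀ t ≥ 0, β r t ≤ β' r t) ∧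
      ∀ E (x : ℝ → ℝ) t0 T, t0 ≤ T → BddAbove (x '' Icc t0 T) → (∀ t ∈ Icc t0 T, 0 ≤ x t) →
        0 ≤ E → SmallGainIneq β γ E x t0 T → x T ≤ β' (x t0) (T - t0) + smallGainGain γ E := by
  obtain ⟨γinv, hinvc, hinvm, hinv0, hinv⟩ := hα.exists_continuous_inv
  obtain ⟨D, hD1, hD⟩ := hβ.exists_reach_time (ε := fun b => (b - γ (2 * b)) / 2)
    (fun r hr => half_pos (hα.pos hr)) (by simp [hγ.map_zero])
  have hα2 : ∀ s, 0 ≤ s → s - γ (2 * s) ≤ 2 * s := fun s hs => by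
    linarith [hγ.nonneg (by linarith : 0 ≤ 2 * s)]
  set ψ := overshoot β γinv
  set b : ℕ → ℕ → ℝ := fun n k => (halfStep fun s => s - γ (2 * s))^[k] (ψ n)
  set f : ℕ → ℝ → ℝ := fun n τ => b n (stairIndex (fun j => D (b n j)) τ)
  have hψ : ∀ n : ℕ, 0 ≤ ψ n := fun n => overshoot_nonneg hβ n.cast_nonneg
  obtain ⟨h, hhc, hhm, hha, hht, hfh⟩ := exists_continuous_majorant (f := f)
    (fun n => (antitone_iterate_halfStep hα hα2 (hψ n)).comp_monotone (monotone_stairIndex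
      fun _ => hD1 _))
    (fun n => (tendsto_iterate_halfStep hα hα2 (hψ n)).comp (tendsto_stairIndex fun _ => hD1 _))
  have hmin : ∀ r, 0 ≤ r → ∀ t, 0 ≤ min (ψ r) (h r t) := fun r hr t =>
    le_min (overshoot_nonneg hβ hr) ((hha r).le_of_tendsto (hht r) t)
  refine ⟨_, hβ.add_min (continuousOn_overshoot hβ hinvc) (fun a ha _ _ hab =>
    overshoot_mono hβ hinvm ha hab) (overshoot_zero hβ hinv0) hhc hhm hha hht,
    fun r hr t _ => le_add_of_nonneg_right (hmin r hr t), ?_⟩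
  intro E x t0 T hT hbdd hx hE hQ
  have hr : 0 ≤ x t0 := hx t0 ⟨le_rfl, hT⟩
  set n := ⌊x t0⌋₊ + 1
  have hbound := hQ.le_max_overshoot hβ hinv hT hbdd hx T ⟨hT, le_rfl⟩
  have hdecay := hQ.le_max_iterate hβ hγ hinv hT hbdd hx hE hD1 hD
    (overshoot_mono hβ hinvm hr (by simpa [n] using (Nat.lt_floor_add_one (x t0)).le) :
      ψ (x t0) ≤ b n 0)
    (fun k => Function.iterate_succ_apply' _ _ _) _ T ⟨hT, le_rfl⟩
    (by linarith [sum_range_stairIndex_le (d := fun j => D (b n j)) (sub_nonneg.2 hT)])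
  calc x T ≤ max (min (ψ (x t0)) (f n (T - t0))) (smallGainGain γ E) := by
        rw [max_min_distrib_right]
        exact le_min hbound hdecay
    _ ≤ min (ψ (x t0)) (h (x t0) (T - t0)) + smallGainGain γ E := by
        have := (classKinf_smallGainGain hγ).nonneg hE
        exact max_le (le_add_of_le_of_nonneg (min_le_min le_rfl (hfh _ _)) this)
          (by linarith [hmin _ hr (T - t0)])
    _ ≤ _ := by linarith [hβ.nonneg hr (sub_nonneg.2 hT)]

section SupNorm

variable {ι : Type*} [Fintype ι] {E : Type*} {F : ι → Type*} [SeminormedAddGroup E]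
  [∀ i, SeminormedAddGroup (F i)]

lemma norm_prod_apply_le (p : E × ∀ i, F i) (i : ι) : ‖(p.1, p.2 i)‖ ≤ ‖p‖ := by
  simpa only [Prod.norm_def] using max_le_max le_rfl (norm_le_pi_norm p.2 i)

lemma norm_prod_pi_le_iff [Nonempty ι] {p : E × ∀ i, F i} {c : ℝ} :
    ‖p‖ ≤ c ↔ ∀ i, ‖(p.1, p.2 i)‖ ≤ c := by
  refine ⟨fun h i => (norm_prod_apply_le p i).trans h, fun h => ?_⟩
  have h₀ := h (Classical.arbitrary ι)
  rw [Prod.norm_def] at h₀ ⊢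
  have hc : 0 ≤ c := (norm_nonneg _).trans (le_of_max_le_left h₀)
  refine max_le (le_of_max_le_left h₀) ((pi_norm_le_iff_of_nonneg hc).2 fun i => ?_)
  exact le_of_max_le_right (by simpa only [Prod.norm_def] using h i)

end SupNorm

section BlendedDynamics

variable {N m nz : ℕ} {F : Fin N → ℝ → (Fin m → ℝ) → (Fin nz → ℝ) → (Fin m → ℝ)}
  {Z : ℝ → (Fin nz → ℝ) → (Fin m → ℝ) → (Fin nz → ℝ)} {β : ℝ → ℝ → ℝ} {γ : ℝ → ℝ}

def ReducedDeltaISS (F : Fin N → ℝ → (Fin m → ℝ) → (Fin nz → ℝ) → (Fin m → ℝ))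
    (Z : ℝ → (Fin nz → ℝ) → (Fin m → ℝ) → (Fin nz → ℝ)) (β : ℝ → ℝ → ℝ) (γ : ℝ → ℝ) : Prop :=
  ∀ (t0 : ℝ) (σ σh : ℝ → Fin m → ℝ) (ζ ζh : ℝ → Fin nz → ℝ)
    (e0 eh0 : ℝ → Fin m → ℝ) (e eh : Fin N → ℝ → Fin m → ℝ) (d dh : Fin N → ℝ → Fin nz → ℝ),
    (∀ t ≥ t0, HasDerivAt σ ((N : ℝ)⁻¹ • ∑ i, F i t (σ t + e i t) (ζ t + d i t)) t) →
    (∀ t ≥ t0, HasDerivAt ζ (Z t (ζ t) (σ t + e0 t)) t) →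
    (∀ t ≥ t0, HasDerivAt σh ((N : ℝ)⁻¹ • ∑ i, F i t (σh t + eh i t) (ζh t + dh i t)) t) →
    (∀ t ≥ t0, HasDerivAt ζh (Z t (ζh t) (σh t + eh0 t)) t) →
    ∀ t ≥ t0, ‖(σh t, ζh t) - (σ t, ζ t)‖ ≤
      β ‖(σh t0, ζh t0) - (σ t0, ζ t0)‖ (t - t0) +
      γ (sSup {r | ∃ s ∈ Ico t0 t,
        r = ‖eh0 s - e0 s‖ ∨ (∃ i, r = ‖eh i s - e i s‖) ∨ ∃ i, r = ‖dh i s - d i s‖})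

def IsBlendedSolution (F : Fin N → ℝ → (Fin m → ℝ) → (Fin nz → ℝ) → (Fin m → ℝ))
    (Z : ℝ → (Fin nz → ℝ) → (Fin m → ℝ) → (Fin nz → ℝ)) (t0 : ℝ) (σ : ℝ → Fin m → ℝ)
    (ζ : Fin N → ℝ → Fin nz → ℝ) (e : Fin N → ℝ → Fin m → ℝ) : Prop :=
  (∀ t ≥ t0, HasDerivAt σ ((N : ℝ)⁻¹ • ∑ i, F i t (σ t + e i t) (ζ i t)) t) ∧
    ∀ i, ∀ t ≥ t0, HasDerivAt (ζ i) (Z t (ζ i t) (σ t + e i t)) t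

def inputNorms (e eh : Fin N → ℝ → Fin m → ℝ) (a b : ℝ) : Set ℝ :=
  {r | ∃ s ∈ Ico a b, ∃ i, r = ‖eh i s - e i s‖}

/-- The inputs of agent `i` viewed as a solution of the reduced order dynamics:
`e₀ = e i` and, for every `j`, `e j` and `d j = ζ j - ζ i`. -/
def agentInputNorms (e eh : Fin N → ℝ → Fin m → ℝ) (ζ ζh : Fin N → ℝ → Fin nz → ℝ) (i : Fin N)
    (a b : ℝ) : Set ℝ :=
  {r | ∃ s ∈ Ico a b, r = ‖eh i s - e i s‖ ∨ (∃ j, r = ‖eh j s - e j s‖) ∨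
    ∃ j, r = ‖(ζh j s - ζh i s) - (ζ j s - ζ i s)‖}

variable {t0 : ℝ} {σ σh : ℝ → Fin m → ℝ} {ζ ζh : Fin N → ℝ → Fin nz → ℝ}
  {e eh : Fin N → ℝ → Fin m → ℝ}

lemma IsBlendedSolution.agent_estimate (hred : ReducedDeltaISS F Z β γ)
    (hs : IsBlendedSolution F Z t0 σ ζ e) (hsh : IsBlendedSolution F Z t0 σh ζh eh) (i : Fin N)
    {u t : ℝ} (hu : t0 ≤ u) (hut : u ≤ t) :
    ‖(σh t, ζh i t) - (σ t, ζ i t)‖ ≤ β ‖(σh u, ζh i u) - (σ u, ζ i u)‖ (t - u) +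
      γ (sSup (agentInputNorms e eh ζ ζh i u t)) := by
  have hζ : ∀ (w : Fin N → ℝ → Fin nz → ℝ) j s, w i s + (w j s - w i s) = w j s :=
    fun _ _ _ => add_sub_cancel _ _
  unfold ReducedDeltaISS at hred
  refine hred u σ σh (ζ i) (ζh i) (e i) (eh i) e eh (fun j s => ζ j s - ζ i s)
    (fun j s => ζh j s - ζh i s) (fun s hs' => ?_) (fun s hs' => hs.2 i s (hu.trans hs'))
    (fun s hs' => ?_) (fun s hs' => hsh.2 i s (hu.trans hs')) t hut
  · simpa only [hζ] using hs.1 s (hu.trans hs')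
  · simpa only [hζ] using hsh.1 s (hu.trans hs')

lemma IsBlendedSolution.continuousAt (hs : IsBlendedSolution F Z t0 σ ζ e) {t : ℝ}
    (ht : t0 ≤ t) : ContinuousAt (fun s => (σ s, fun i => ζ i s)) t :=
  (hs.1 t ht).continuousAt.prodMk (continuousAt_pi.2 fun i => (hs.2 i t ht).continuousAt)

lemma sSup_agentInputNorms_le {t u t' M : ℝ} (hbdd : BddAbove (inputNorms e eh t0 t))
    (hu : t0 ≤ u) (ht' : t' ≤ t) (hM : ∀ s ∈ Ico u t', ∀ j, ‖ζh j s - ζ j s‖ ≤ M)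
    (hM0 : 0 ≤ M) (i : Fin N) :
    sSup (agentInputNorms e eh ζ ζh i u t') ≤ max (sSup (inputNorms e eh t0 t)) (2 * M) := by
  refine Real.sSup_le ?_ (le_max_of_le_right (by linarith))
  rintro r ⟨s, hs, rfl | ⟨j, rfl⟩ | ⟨j, rfl⟩⟩
  all_goals have hs' : s ∈ Ico t0 t := ⟨hu.trans hs.1, hs.2.trans_le ht'⟩
  · exact le_max_of_le_left (le_csSup hbdd ⟨s, hs', i, rfl⟩)
  · exact le_max_of_le_left (le_csSup hbdd ⟨s, hs', j, rfl⟩)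
  · refine le_max_of_le_right ?_
    rw [sub_sub_sub_comm]
    linarith [norm_sub_le (ζh j s - ζ j s) (ζh i s - ζ i s), hM s hs j, hM s hs i]

lemma not_bddAbove_agentInputNorms {t : ℝ} (h : ¬BddAbove (inputNorms e eh t0 t)) (i : Fin N) :
    ¬BddAbove (agentInputNorms e eh ζ ζh i t0 t) :=
  fun hA => h (hA.mono fun _ ⟨s, hs, j, hj⟩ =>
    (⟨s, hs, .inr (.inl ⟨j, hj⟩)⟩ : _ ∈ agentInputNorms e eh ζ ζh i t0 t))

lemma IsBlendedSolution.bddAbove_norm_sub (hs : IsBlendedSolution F Z t0 σ ζ e)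
    (hsh : IsBlendedSolution F Z t0 σh ζh eh) (t : ℝ) :
    BddAbove ((fun s => ‖(σh s, fun i => ζh i s) - (σ s, fun i => ζ i s)‖) '' Icc t0 t) :=
  isCompact_Icc.bddAbove_image fun _ hs' =>
    ((hsh.continuousAt hs'.1).sub (hs.continuousAt hs'.1)).norm.continuousWithinAt

lemma IsBlendedSolution.smallGainIneq [Nonempty (Fin N)] (hs : IsBlendedSolution F Z t0 σ ζ e)
    (hred : ReducedDeltaISS F Z β γ) (hβ : ClassKL β) (hγ : ClassKinf γ)
    (hsh : IsBlendedSolution F Z t0 σh ζh eh) {t : ℝ} (hbdd : BddAbove (inputNorms e eh t0 t)) :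
    SmallGainIneq β γ (sSup (inputNorms e eh t0 t))
      (fun s => ‖(σh s, fun i => ζh i s) - (σ s, fun i => ζ i s)‖) t0 t := by
  intro u t' M hu hut' ht' hM
  have hζM : ∀ s ∈ Ico u t', ∀ j, ‖ζh j s - ζ j s‖ ≤ M := fun s hs j =>
    (norm_snd_le _).trans ((norm_prod_apply_le _ j).trans (hM s ⟨hs.1, hs.2.le⟩))
  have hM0 : 0 ≤ M := (norm_nonneg _).trans (hM u ⟨le_rfl, hut'⟩)
  refine norm_prod_pi_le_iff.2 fun i => (hs.agent_estimate hred hsh i hu hut').trans ?_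
  gcongr ?_ + ?_
  · exact hβ.mono_left (sub_nonneg.2 hut') (norm_nonneg _)
      (norm_prod_apply_le ((σh u, fun i => ζh i u) - (σ u, fun i => ζ i u)) i)
  · refine hγ.mono (Real.sSup_nonneg ?_) (sSup_agentInputNorms_le hbdd hu ht' hζM hM0 i)
    rintro _ ⟨s, _, rfl | ⟨j, rfl⟩ | ⟨j, rfl⟩⟩ <;> exact norm_nonneg _

lemma IsBlendedSolution.norm_sub_le_of_not_bddAbove [Nonempty (Fin N)]
    (hs : IsBlendedSolution F Z t0 σ ζ e) (hred : ReducedDeltaISS F Z β γ) (hβ : ClassKL β)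
    (hγ : ClassKinf γ) (hsh : IsBlendedSolution F Z t0 σh ζh eh) {t : ℝ} (ht : t0 ≤ t)
    (hunb : ¬BddAbove (inputNorms e eh t0 t)) :
    ‖(σh t, fun i => ζh i t) - (σ t, fun i => ζ i t)‖ ≤
      β ‖(σh t0, fun i => ζh i t0) - (σ t0, fun i => ζ i t0)‖ (t - t0) := by
  refine norm_prod_pi_le_iff.2 fun i => (hs.agent_estimate hred hsh i le_rfl ht).trans ?_
  rw [Real.sSup_of_not_bddAbove (not_bddAbove_agentInputNorms hunb i), hγ.map_zero, add_zero]
  exact hβ.mono_left (sub_nonneg.2 ht) (norm_nonneg _)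
    (norm_prod_apply_le ((σh t0, fun i => ζh i t0) - (σ t0, fun i => ζ i t0)) i)

end BlendedDynamics

/-- Small-gain result (Lemma B.1): if the perturbed reduced order blended dynamics is
δ-ISS with `(β, γ̂)` and `α(s) = s - γ̂(2s)` is class 𝒦_∞, then the perturbed blended
dynamics (with identical internal vector field `Z`) is δ-ISS. -/
theorem stmt12 {N m nz : ℕ} (hN : 0 < N)
    (F : Fin N → ℝ → (Fin m → ℝ) → (Fin nz → ℝ) → (Fin m → ℝ))
    (Z : ℝ → (Fin nz → ℝ) → (Fin m → ℝ) → (Fin nz → ℝ))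
    (β : ℝ → ℝ → ℝ) (γhat : ℝ → ℝ) (hβ : ClassKL β) (hγ : ClassKinf γhat)
    (hα : ClassKinf (fun s => s - γhat (2 * s)))
    -- δ-ISS of the perturbed reduced order blended dynamics:
    (hδISSred : ∀ (t0 : ℝ) (σ σh : ℝ → Fin m → ℝ) (ζ ζh : ℝ → Fin nz → ℝ)
        (e0 eh0 : ℝ → Fin m → ℝ) (e eh : Fin N → ℝ → Fin m → ℝ)
        (d dh : Fin N → ℝ → Fin nz → ℝ),
        (∀ t ≥ t0, HasDerivAt σ ((N : ℝ)⁻¹ • ∑ i, F i t (σ t + e i t) (ζ t + d i t)) t) →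
        (∀ t ≥ t0, HasDerivAt ζ (Z t (ζ t) (σ t + e0 t)) t) →
        (∀ t ≥ t0, HasDerivAt σh
            ((N : ℝ)⁻¹ • ∑ i, F i t (σh t + eh i t) (ζh t + dh i t)) t) →
        (∀ t ≥ t0, HasDerivAt ζh (Z t (ζh t) (σh t + eh0 t)) t) →
        ∀ t ≥ t0, ‖(σh t, ζh t) - (σ t, ζ t)‖ ≤
          β ‖(σh t0, ζh t0) - (σ t0, ζ t0)‖ (t - t0) +
          γhat (sSup {r | ∃ s ∈ Set.Ico t0 t,
            r = ‖eh0 s - e0 s‖ ∨ (∃ i, r = ‖eh i s - e i s‖) ∨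
              ∃ i, r = ‖dh i s - d i s‖})) :
    -- then the perturbed blended dynamics is δ-ISS:
    ∃ (β' : ℝ → ℝ → ℝ) (γ' : ℝ → ℝ), ClassKL β' ∧ ClassKinf γ' ∧
      ∀ (t0 : ℝ) (σ σh : ℝ → Fin m → ℝ) (ζ ζh : Fin N → ℝ → Fin nz → ℝ)
        (e eh : Fin N → ℝ → Fin m → ℝ),
        (∀ t ≥ t0, HasDerivAt σ ((N : ℝ)⁻¹ • ∑ i, F i t (σ t + e i t) (ζ i t)) t) →
        (∀ i, ∀ t ≥ t0, HasDerivAt (ζ i) (Z t (ζ i t) (σ t + e i t)) t) →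
        (∀ t ≥ t0, HasDerivAt σh ((N : ℝ)⁻¹ • ∑ i, F i t (σh t + eh i t) (ζh i t)) t) →
        (∀ i, ∀ t ≥ t0, HasDerivAt (ζh i) (Z t (ζh i t) (σh t + eh i t)) t) →
        ∀ t ≥ t0, ‖(σh t, fun i => ζh i t) - (σ t, fun i => ζ i t)‖ ≤
          β' ‖(σh t0, fun i => ζh i t0) - (σ t0, fun i => ζ i t0)‖ (t - t0) +
          γ' (sSup {r | ∃ s ∈ Set.Ico t0 t, ∃ i, r = ‖eh i s - e i s‖}) := by
  obtain ⟨β', hβ', hββ', hsg⟩ := exists_classKL_of_smallGainIneq hβ hγ hα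
  refine ⟨β', smallGainGain γhat, hβ', classKinf_smallGainGain hγ, ?_⟩
  intro t0 σ σh ζ ζh e eh hσ hζ hσh hζh t ht
  have : Nonempty (Fin N) := ⟨⟨0, hN⟩⟩
  have hs : IsBlendedSolution F Z t0 σ ζ e := ⟨hσ, hζ⟩
  have hsh : IsBlendedSolution F Z t0 σh ζh eh := ⟨hσh, hζh⟩
  by_cases hbdd : BddAbove (inputNorms e eh t0 t)
  · exact hsg _ _ t0 t ht (hs.bddAbove_norm_sub hsh t) (fun _ _ => norm_nonneg _)
      (Real.sSup_nonneg fun _ ⟨_, _, _, h⟩ => h ▸ norm_nonneg _)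
      (hs.smallGainIneq hδISSred hβ hγ hsh hbdd)
  · -- both suprema of unbounded sets take the junk value `0`
    calc _ ≤ β _ (t - t0) := hs.norm_sub_le_of_not_bddAbove hδISSred hβ hγ hsh ht hbdd
      _ ≤ β' _ (t - t0) + smallGainGain γhat (sSup (inputNorms e eh t0 t)) := by
        rw [Real.sSup_of_not_bddAbove hbdd, (classKinf_smallGainGain hγ).map_zero, add_zero]
        exact hββ' _ (norm_nonneg _) _ (sub_nonneg.2 ht)
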